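/- Lower bound on TV distance between balanced product distributions: there exist absolute constants α₀ ∈ (0,1] and C > 0 such that if P and Q are product distributions on {0,1}^d with mean vectors p, q satisfying p_i ∈ [1/3, 2/3] for all i, and ‖p − q‖₂ ≥ α for some α ≤ α₀, then SD(P, Q) ≥ C·α. -/

import Mathlib

open scoped BigOperators

/-- The product Bernoulli distribution on `{0,1}^d` with mean vector `p`
(`true` encodes `1`). -/
noncomputable def prodBer (d : ℕ) (p : Fin d → ℝ) (x : Fin d → Bool) : ℝ :=
  ∏ i, if x i then p i else 1 - p i

/-- Statistical distance between two product Bernoulli distributions on `{0,1}^d`. -/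
noncomputable def sdBer (d : ℕ) (p q : Fin d → ℝ) : ℝ :=
  (1/2) * ∑ x : Fin d → Bool, |prodBer d p x - prodBer d q x|

/-!
Three regimes. If some coordinate has `|pᵢ - qᵢ| ≥ α/2`, the event `xᵢ = 1` already separates
`P` and `Q`. If `s = ‖p - q‖²` is at least a constant, the linear statistic `∑ (pᵢ - qᵢ) xᵢ` has
means `s` apart and variance at most `s/4` under both laws, and Cauchy–Schwarz gives
`SD ≥ s / (1 + s)`.

Otherwise every `qᵢ` lies in `[1/4, 3/4]` and the likelihood ratio `dP/dQ = ∏ (1 + zᵢ(xᵢ))` is a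
product of independent mean-one factors with `|zᵢ| ≤ 2α`. For `X = dP/dQ - 1` this gives
`E_Q X² ≥ V := ∑ E zᵢ² ≥ 4α²` and, after the first-order terms cancel, `E_Q X⁴ ≤ 45 V²`.
Hölder's `(E X²)³ ≤ (E |X|)² E X⁴` then yields `2 SD = E_Q |X| ≥ √(V / 45) ≥ 2α / 7`.
-/

open Finset Set

noncomputable def berMean (r : ℝ) (g : Bool → ℝ) : ℝ := r * g true + (1 - r) * g false

lemma berMean_nonneg {r : ℝ} (hr : r ∈ Icc (0 : ℝ) 1) {g : Bool → ℝ} (hg : ∀ b, 0 ≤ g b) :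
    0 ≤ berMean r g :=
  add_nonneg (mul_nonneg hr.1 (hg true)) (mul_nonneg (sub_nonneg.2 hr.2) (hg false))

lemma prodBer_nonneg {d : ℕ} {r : Fin d → ℝ} (hr : ∀ i, r i ∈ Icc (0 : ℝ) 1) (x : Fin d → Bool) :
    0 ≤ prodBer d r x :=
  prod_nonneg fun i _ => by
    cases x i
    · exact sub_nonneg.2 (hr i).2
    · exact (hr i).1

lemma sdBer_nonneg (d : ℕ) (p q : Fin d → ℝ) : 0 ≤ sdBer d p q :=
  mul_nonneg (by norm_num) (sum_nonneg fun _ _ => abs_nonneg _)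

section ProductBernoulli

variable {d : ℕ} (r : Fin d → ℝ)

lemma sum_prodBer_mul_prod (g : Fin d → Bool → ℝ) :
    ∑ x, prodBer d r x * ∏ i, g i (x i) = ∏ i, berMean (r i) (g i) := by
  simp_rw [prodBer, ← prod_mul_distrib]
  rw [← Fintype.prod_sum fun i b => (if b then r i else 1 - r i) * g i b]
  simp [berMean]

lemma sum_prodBer_mul_prod_pow (g : Fin d → Bool → ℝ) (k : ℕ) :
    ∑ x, prodBer d r x * (∏ i, g i (x i)) ^ k = ∏ i, berMean (r i) (fun b => g i b ^ k) := by
  simp_rw [← Finset.prod_pow]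
  exact sum_prodBer_mul_prod r fun i b => g i b ^ k

lemma sum_prodBer : ∑ x, prodBer d r x = 1 := by
  simpa [berMean] using sum_prodBer_mul_prod r fun _ _ => 1

lemma sum_prodBer_mul_apply (i : Fin d) (g : Bool → ℝ) :
    ∑ x, prodBer d r x * g (x i) = berMean (r i) g := by
  classical
  have hone : ∀ k, berMean (r k) 1 = 1 := fun k => by simp [berMean]
  have := sum_prodBer_mul_prod r (Pi.mulSingle i g)
  rwa [Fintype.prod_eq_single i fun k hk => by simp [hk, hone],
    sum_congr rfl fun x _ => by
      rw [Fintype.prod_eq_single i fun k hk => by simp [hk]], Pi.mulSingle_eq_same] at this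

lemma sum_prodBer_mul_apply_mul_apply {i j : Fin d} (hij : i ≠ j) (g h : Bool → ℝ) :
    ∑ x, prodBer d r x * (g (x i) * h (x j)) = berMean (r i) g * berMean (r j) h := by
  classical
  have hone : ∀ k, berMean (r k) 1 = 1 := fun k => by simp [berMean]
  have := sum_prodBer_mul_prod r (Pi.mulSingle i g * Pi.mulSingle j h)
  rw [prod_eq_mul_of_mem i j (mem_univ _) (mem_univ _) hij
      fun k _ hk => by simp [hk.1, hk.2, hone],
    sum_congr rfl fun x _ => by
      rw [prod_eq_mul_of_mem i j (mem_univ _) (mem_univ _) hij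
        fun k _ hk => by simp [hk.1, hk.2]]] at this
  simpa [hij, hij.symm] using this

lemma sum_prodBer_mul_centered_mul_centered (i j : Fin d) :
    ∑ x, prodBer d r x * (((x i).toNat - r i) * ((x j).toNat - r j)) =
      if i = j then r i * (1 - r i) else 0 := by
  split_ifs with hij
  · subst hij
    refine (sum_prodBer_mul_apply r i fun b => ((b.toNat : ℝ) - r i) * (b.toNat - r i)).trans ?_
    simp only [berMean, Bool.toNat_true, Bool.toNat_false, Nat.cast_one, Nat.cast_zero]
    ring
  · refine (sum_prodBer_mul_apply_mul_apply r hij (fun b => (b.toNat : ℝ) - r i)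
      fun b => (b.toNat : ℝ) - r j).trans ?_
    simp only [berMean, Bool.toNat_true, Bool.toNat_false, Nat.cast_one, Nat.cast_zero]
    ring

lemma sum_prodBer_mul_sum_centered (c : Fin d → ℝ) :
    ∑ x, prodBer d r x * ∑ i, c i * ((x i).toNat - r i) = 0 := by
  simp_rw [mul_sum]
  rw [sum_comm]
  refine sum_eq_zero fun i _ => ?_
  refine (sum_prodBer_mul_apply r i fun b => c i * ((b.toNat : ℝ) - r i)).trans ?_
  simp only [berMean, Bool.toNat_true, Bool.toNat_false, Nat.cast_one, Nat.cast_zero]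
  ring

lemma sum_prodBer_mul_sq_sum_centered (c : Fin d → ℝ) :
    ∑ x, prodBer d r x * (∑ i, c i * ((x i).toNat - r i)) ^ 2 =
      ∑ i, c i ^ 2 * (r i * (1 - r i)) := by
  calc ∑ x, prodBer d r x * (∑ i, c i * ((x i).toNat - r i)) ^ 2
      = ∑ i, ∑ j, c i * c j *
          ∑ x, prodBer d r x * (((x i).toNat - r i) * ((x j).toNat - r j)) := by
        simp_rw [sq, sum_mul_sum, mul_sum]
        rw [sum_comm]
        refine sum_congr rfl fun i _ => ?_
        rw [sum_comm]
        exact sum_congr rfl fun j _ => sum_congr rfl fun x _ => by ring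
    _ = ∑ i, c i ^ 2 * (r i * (1 - r i)) := by
        simp_rw [sum_prodBer_mul_centered_mul_centered, mul_ite, mul_zero, sum_ite_eq,
          Finset.mem_univ, if_true, sq]

lemma sum_sub_eq_sum_centered_add (c : Fin d → ℝ) (m : ℝ) (x : Fin d → Bool) :
    ∑ i, c i * ((x i).toNat : ℝ) - m = ∑ i, c i * ((x i).toNat - r i) + (∑ i, c i * r i - m) := by
  simp only [mul_sub, sum_sub_distrib]
  ring

lemma sum_prodBer_mul_sum_sub (c : Fin d → ℝ) (m : ℝ) :
    ∑ x, prodBer d r x * (∑ i, c i * ((x i).toNat : ℝ) - m) = ∑ i, c i * r i - m := by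
  simp_rw [sum_sub_eq_sum_centered_add r c m, mul_add, sum_add_distrib, ← sum_mul,
    sum_prodBer_mul_sum_centered, sum_prodBer, zero_add, one_mul]

lemma sum_prodBer_mul_sq_sum_sub (c : Fin d → ℝ) (m : ℝ) :
    ∑ x, prodBer d r x * (∑ i, c i * ((x i).toNat : ℝ) - m) ^ 2 =
      ∑ i, c i ^ 2 * (r i * (1 - r i)) + (∑ i, c i * r i - m) ^ 2 := by
  set k := ∑ i, c i * r i - m
  have h : ∀ x, prodBer d r x * (∑ i, c i * ((x i).toNat : ℝ) - m) ^ 2 =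
      prodBer d r x * (∑ i, c i * ((x i).toNat - r i)) ^ 2 +
        2 * k * (prodBer d r x * ∑ i, c i * ((x i).toNat - r i)) + k ^ 2 * prodBer d r x :=
    fun x => by rw [sum_sub_eq_sum_centered_add r c m]; ring
  simp_rw [h, sum_add_distrib, ← mul_sum, sum_prodBer_mul_sq_sum_centered,
    sum_prodBer_mul_sum_centered, sum_prodBer]
  ring

end ProductBernoulli

lemma abs_sum_mul_le_half_sum_abs {ι : Type*} [Fintype ι] {D f : ι → ℝ} (hD : ∑ x, D x = 0)
    (hf : ∀ x, f x ∈ Icc (0 : ℝ) 1) : |∑ x, D x * f x| ≤ 1 / 2 * ∑ x, |D x| := by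
  have h : ∑ x, D x * f x = ∑ x, D x * (f x - 1 / 2) := by
    simp only [mul_sub, sum_sub_distrib, ← sum_mul, hD, zero_mul, sub_zero]
  rw [h, mul_sum]
  refine (abs_sum_le_sum_abs _ _).trans (sum_le_sum fun x _ => ?_)
  rw [abs_mul, mul_comm]
  gcongr
  exact abs_le.2 ⟨by linarith [(hf x).1], by linarith [(hf x).2]⟩

lemma abs_sub_le_sdBer {d : ℕ} (p q : Fin d → ℝ) (i : Fin d) : |p i - q i| ≤ sdBer d p q := by
  have key := abs_sum_mul_le_half_sum_abs (D := fun x => prodBer d p x - prodBer d q x)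
    (f := fun x => ((x i).toNat : ℝ)) (by simp [sum_sub_distrib, sum_prodBer])
    fun x => by cases x i <;> simp
  have hmean : ∀ r : Fin d → ℝ, ∑ x, prodBer d r x * ((x i).toNat : ℝ) = r i := fun r =>
    (sum_prodBer_mul_apply r i fun b => (b.toNat : ℝ)).trans (by simp [berMean])
  simpa only [sdBer, sub_mul, sum_sub_distrib, hmean] using key

lemma sq_sum_sub_mul_le {ι : Type*} [Fintype ι] {P Q : ι → ℝ} (hP : ∀ x, 0 ≤ P x)
    (hQ : ∀ x, 0 ≤ Q x) (U : ι → ℝ) :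
    (∑ x, (P x - Q x) * U x) ^ 2 ≤ (∑ x, (P x + Q x) * U x ^ 2) * ∑ x, |P x - Q x| := by
  refine sum_sq_le_sum_mul_sum_of_sq_le_mul _ (fun x _ => by positivity [hP x, hQ x])
    (fun x _ => abs_nonneg _) fun x _ => ?_
  have habs : |P x - Q x| ≤ P x + Q x :=
    abs_le.2 ⟨by linarith [hP x, hQ x], by linarith [hP x, hQ x]⟩
  calc ((P x - Q x) * U x) ^ 2 = |P x - Q x| * |P x - Q x| * U x ^ 2 := by
        rw [mul_pow, ← sq, sq_abs]
    _ ≤ (P x + Q x) * |P x - Q x| * U x ^ 2 := by gcongr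
    _ = (P x + Q x) * U x ^ 2 * |P x - Q x| := by ring

lemma sumSq_div_one_add_le_sdBer {d : ℕ} {p q : Fin d → ℝ} (hp : ∀ i, p i ∈ Icc (0 : ℝ) 1)
    (hq : ∀ i, q i ∈ Icc (0 : ℝ) 1) :
    (∑ i, (p i - q i) ^ 2) / (1 + ∑ i, (p i - q i) ^ 2) ≤ sdBer d p q := by
  set s := ∑ i, (p i - q i) ^ 2
  set c : Fin d → ℝ := fun i => p i - q i
  set m := ∑ i, c i * ((p i + q i) / 2)
  set U : (Fin d → Bool) → ℝ := fun x => ∑ i, c i * ((x i).toNat : ℝ) - m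
  have hmean_p : ∑ i, c i * p i - m = s / 2 := by
    simp only [m, c, s, ← sum_sub_distrib, sum_div]
    exact sum_congr rfl fun i _ => by ring
  have hmean_q : ∑ i, c i * q i - m = -(s / 2) := by
    simp only [m, c, s, ← sum_sub_distrib, sum_div, ← sum_neg_distrib]
    exact sum_congr rfl fun i _ => by ring
  have hvar : ∀ r : Fin d → ℝ, ∑ i, c i ^ 2 * (r i * (1 - r i)) ≤ s / 4 := fun r => by
    simp only [s, c, sum_div]
    gcongr with i
    nlinarith [sq_nonneg (2 * r i - 1), sq_nonneg (p i - q i),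
      mul_nonneg (sq_nonneg (p i - q i)) (sq_nonneg (2 * r i - 1))]
  have hgap : ∑ x, (prodBer d p x - prodBer d q x) * U x = s := by
    simp only [sub_mul, sum_sub_distrib, U, sum_prodBer_mul_sum_sub, hmean_p, hmean_q]
    ring
  have hsecond : ∑ x, (prodBer d p x + prodBer d q x) * U x ^ 2 ≤ s / 2 + s ^ 2 / 2 := by
    simp only [add_mul, sum_add_distrib, U, sum_prodBer_mul_sq_sum_sub, hmean_p, hmean_q]
    nlinarith [hvar p, hvar q]
  have hCS := sq_sum_sub_mul_le (prodBer_nonneg hp) (prodBer_nonneg hq) U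
  rw [hgap, show ∑ x, |prodBer d p x - prodBer d q x| = 2 * sdBer d p q by rw [sdBer]; ring]
    at hCS
  have hsd := sdBer_nonneg d p q
  have hs : 0 ≤ s := sum_nonneg fun i _ => sq_nonneg _
  rw [div_le_iff₀ (by positivity)]
  rcases hs.eq_or_lt with hs0 | hs0
  · rw [← hs0]; linarith
  · refine le_of_mul_le_mul_left ?_ hs0
    nlinarith [mul_le_mul_of_nonneg_right hsecond (by positivity : 0 ≤ 2 * sdBer d p q)]

lemma one_add_sum_le_prod_one_add {ι : Type*} (s : Finset ι) {a : ι → ℝ} (ha : ∀ i, 0 ≤ a i) :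
    1 + ∑ i ∈ s, a i ≤ ∏ i ∈ s, (1 + a i) := by
  classical
  induction s using Finset.induction_on with
  | empty => simp
  | insert j s hj ih =>
    rw [sum_insert hj, prod_insert hj]
    nlinarith [ha j, sum_nonneg fun i (_ : i ∈ s) => ha i,
      mul_le_mul_of_nonneg_left ih (by linarith [ha j] : (0 : ℝ) ≤ 1 + a j)]

lemma prod_one_add_le_one_add_sum_add_sq {ι : Type*} (s : Finset ι) {a : ι → ℝ}
    (ha : ∀ i, 0 ≤ a i) (h1 : ∑ i ∈ s, a i ≤ 1) :
    ∏ i ∈ s, (1 + a i) ≤ 1 + ∑ i ∈ s, a i + (∑ i ∈ s, a i) ^ 2 := by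
  have h0 : 0 ≤ ∑ i ∈ s, a i := sum_nonneg fun i _ => ha i
  have hexp := Real.abs_exp_sub_one_sub_id_le (abs_le.2 ⟨by linarith, h1⟩)
  linarith [Real.prod_one_add_le_exp_sum s ha, (abs_le.1 hexp).2]

lemma sum_mul_sq_pow_three_le {ι : Type*} [Fintype ι] {w : ι → ℝ}
    (hw : ∀ x, 0 ≤ w x) (X : ι → ℝ) :
    (∑ x, w x * X x ^ 2) ^ 3 ≤ (∑ x, w x * |X x|) ^ 2 * ∑ x, w x * X x ^ 4 := by
  set W := ∑ x, w x * X x ^ 2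
  set A := ∑ x, w x * |X x|
  set T := ∑ x, w x * |X x| ^ 3
  set M := ∑ x, w x * X x ^ 4
  have hWT : W ^ 2 ≤ A * T :=
    sum_sq_le_sum_mul_sum_of_sq_le_mul _ (fun x _ => mul_nonneg (hw x) (abs_nonneg _))
      (fun x _ => by positivity [hw x]) fun x _ => le_of_eq <| by
        linear_combination (-(w x ^ 2) * (X x ^ 2 + |X x| ^ 2)) * sq_abs (X x)
  have hTM : T ^ 2 ≤ W * M :=
    sum_sq_le_sum_mul_sum_of_sq_le_mul _ (fun x _ => by positivity [hw x])
      (fun x _ => by positivity [hw x]) fun x _ => le_of_eq <| by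
        linear_combination
          (w x ^ 2 * (|X x| ^ 4 + |X x| ^ 2 * X x ^ 2 + X x ^ 4)) * sq_abs (X x)
  have hW : 0 ≤ W := sum_nonneg fun x _ => by positivity [hw x]
  rcases hW.eq_or_lt with hW0 | hW0
  · rw [← hW0, zero_pow three_ne_zero]
    exact mul_nonneg (sq_nonneg A) (sum_nonneg fun x _ => by positivity [hw x])
  · refine le_of_mul_le_mul_left ?_ hW0
    calc W * W ^ 3 = (W ^ 2) ^ 2 := by ring
      _ ≤ (A * T) ^ 2 := pow_le_pow_left₀ (sq_nonneg W) hWT 2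
      _ = A ^ 2 * T ^ 2 := by ring
      _ ≤ A ^ 2 * (W * M) := by gcongr
      _ = W * (A ^ 2 * M) := by ring

section BernoulliMoments

variable {r : ℝ} {z : Bool → ℝ}

lemma berMean_one_add (h : berMean r z = 0) : berMean r (fun b => 1 + z b) = 1 := by
  unfold berMean at *; linear_combination h

lemma berMean_one_add_sq (h : berMean r z = 0) :
    berMean r (fun b => (1 + z b) ^ 2) = 1 + berMean r (fun b => z b ^ 2) := by
  unfold berMean at *; linear_combination 2 * h

lemma berMean_one_add_pow_three (h : berMean r z = 0) :
    berMean r (fun b => (1 + z b) ^ 3) =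
      1 + (3 * berMean r (fun b => z b ^ 2) + berMean r (fun b => z b ^ 3)) := by
  unfold berMean at *; linear_combination 3 * h

lemma berMean_one_add_pow_four (h : berMean r z = 0) :
    berMean r (fun b => (1 + z b) ^ 4) =
      1 + (6 * berMean r (fun b => z b ^ 2) + 4 * berMean r (fun b => z b ^ 3) +
        berMean r (fun b => z b ^ 4)) := by
  unfold berMean at *; linear_combination 4 * h

variable {ε : ℝ}

lemma abs_berMean_pow_three_le (hr : r ∈ Icc (0 : ℝ) 1) (hz : ∀ b, |z b| ≤ ε) :
    |berMean r (fun b => z b ^ 3)| ≤ ε * berMean r (fun b => z b ^ 2) := by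
  have key : ∀ {w y : ℝ}, 0 ≤ w → |y| ≤ ε → |w * y ^ 3| ≤ ε * (w * y ^ 2) :=
    fun {w y} hw hy => by
      rw [abs_mul, abs_of_nonneg hw, abs_pow, pow_succ, sq_abs]
      nlinarith [mul_le_mul_of_nonneg_left hy (mul_nonneg hw (sq_nonneg y))]
  calc |berMean r (fun b => z b ^ 3)|
      ≤ |r * z true ^ 3| + |(1 - r) * z false ^ 3| := abs_add_le _ _
    _ ≤ ε * (r * z true ^ 2) + ε * ((1 - r) * z false ^ 2) :=
        add_le_add (key hr.1 (hz true)) (key (sub_nonneg.2 hr.2) (hz false))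
    _ = ε * berMean r (fun b => z b ^ 2) := by unfold berMean; ring

lemma berMean_pow_four_le (hr : r ∈ Icc (0 : ℝ) 1) (hz : ∀ b, |z b| ≤ ε) :
    berMean r (fun b => z b ^ 4) ≤ ε ^ 2 * berMean r (fun b => z b ^ 2) := by
  have key : ∀ {w y : ℝ}, 0 ≤ w → |y| ≤ ε → w * y ^ 4 ≤ ε ^ 2 * (w * y ^ 2) :=
    fun {w y} hw hy => by
      have : y ^ 2 ≤ ε ^ 2 := sq_le_sq.2 (hy.trans (le_abs_self ε))
      nlinarith [mul_le_mul_of_nonneg_left this (mul_nonneg hw (sq_nonneg y))]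
  unfold berMean
  nlinarith [key hr.1 (hz true), key (sub_nonneg.2 hr.2) (hz false)]

end BernoulliMoments

section ProductPerturbation

variable {d : ℕ} {r : Fin d → ℝ} {z : Fin d → Bool → ℝ}

lemma sum_prodBer_mul_prod_one_add (hz : ∀ i, berMean (r i) (z i) = 0) :
    ∑ x, prodBer d r x * ∏ i, (1 + z i (x i)) = 1 := by
  rw [sum_prodBer_mul_prod r fun i b => 1 + z i b]
  exact prod_eq_one fun i _ => berMean_one_add (hz i)

lemma sum_prodBer_mul_prod_one_add_sub_one_sq (hz : ∀ i, berMean (r i) (z i) = 0) :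
    ∑ x, prodBer d r x * (∏ i, (1 + z i (x i)) - 1) ^ 2 =
      ∏ i, (1 + berMean (r i) fun b => z i b ^ 2) - 1 := by
  have h : ∀ x, prodBer d r x * (∏ i, (1 + z i (x i)) - 1) ^ 2 =
      prodBer d r x * (∏ i, (1 + z i (x i))) ^ 2 -
        2 * (prodBer d r x * ∏ i, (1 + z i (x i))) + prodBer d r x := fun x => by ring
  simp only [h, sum_add_distrib, sum_sub_distrib, ← mul_sum,
    sum_prodBer_mul_prod_pow r (fun i b => 1 + z i b), sum_prodBer_mul_prod_one_add hz,
    sum_prodBer, berMean_one_add_sq (hz _)]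
  ring

lemma sum_prodBer_mul_prod_one_add_sub_one_pow_four (hz : ∀ i, berMean (r i) (z i) = 0) :
    ∑ x, prodBer d r x * (∏ i, (1 + z i (x i)) - 1) ^ 4 =
      ∏ i, (1 + (6 * berMean (r i) (fun b => z i b ^ 2) +
          4 * berMean (r i) (fun b => z i b ^ 3) + berMean (r i) (fun b => z i b ^ 4))) -
        4 * ∏ i, (1 + (3 * berMean (r i) (fun b => z i b ^ 2) +
          berMean (r i) (fun b => z i b ^ 3))) +
        6 * ∏ i, (1 + berMean (r i) fun b => z i b ^ 2) - 3 := by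
  have h : ∀ x, prodBer d r x * (∏ i, (1 + z i (x i)) - 1) ^ 4 =
      prodBer d r x * (∏ i, (1 + z i (x i))) ^ 4 -
        4 * (prodBer d r x * (∏ i, (1 + z i (x i))) ^ 3) +
        6 * (prodBer d r x * (∏ i, (1 + z i (x i))) ^ 2) -
        4 * (prodBer d r x * ∏ i, (1 + z i (x i))) + prodBer d r x := fun x => by ring
  simp only [h, sum_add_distrib, sum_sub_distrib, ← mul_sum,
    sum_prodBer_mul_prod_pow r (fun i b => 1 + z i b), sum_prodBer_mul_prod_one_add hz,
    sum_prodBer, berMean_one_add_sq (hz _), berMean_one_add_pow_three (hz _),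
    berMean_one_add_pow_four (hz _)]
  ring

lemma sum_prodBer_mul_prod_one_add_sub_one_pow_four_le (hr : ∀ i, r i ∈ Icc (0 : ℝ) 1)
    (hz : ∀ i, berMean (r i) (z i) = 0) {ε : ℝ} (hε : ε ∈ Icc (0 : ℝ) (1 / 50))
    (hzε : ∀ i b, |z i b| ≤ ε) (hεV : ε ^ 2 ≤ ∑ i, berMean (r i) fun b => z i b ^ 2)
    (hV : ∑ i, berMean (r i) (fun b => z i b ^ 2) ≤ 2 / 15) :
    ∑ x, prodBer d r x * (∏ i, (1 + z i (x i)) - 1) ^ 4 ≤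
      45 * (∑ i, berMean (r i) fun b => z i b ^ 2) ^ 2 := by
  rw [sum_prodBer_mul_prod_one_add_sub_one_pow_four hz]
  set v : Fin d → ℝ := fun i => berMean (r i) fun b => z i b ^ 2
  set t : Fin d → ℝ := fun i => berMean (r i) fun b => z i b ^ 3
  set f : Fin d → ℝ := fun i => berMean (r i) fun b => z i b ^ 4
  set V := ∑ i, v i
  have hv : ∀ i, 0 ≤ v i := fun i => berMean_nonneg (hr i) fun b => sq_nonneg _
  have ht : ∀ i, |t i| ≤ ε * v i := fun i => abs_berMean_pow_three_le (hr i) (hzε i)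
  have hf : ∀ i, f i ≤ ε ^ 2 * v i := fun i => berMean_pow_four_le (hr i) (hzε i)
  have hf0 : ∀ i, 0 ≤ f i := fun i => berMean_nonneg (hr i) fun b => by positivity
  have ha : ∀ i, 0 ≤ 6 * v i + 4 * t i + f i ∧ 6 * v i + 4 * t i + f i ≤ 61 / 10 * v i :=
    fun i => by
      have := abs_le.1 (ht i)
      constructor <;> nlinarith [hv i, hf0 i, hf i, mul_le_mul_of_nonneg_right hε.2 (hv i),
        mul_le_mul_of_nonneg_right (pow_le_pow_left₀ hε.1 hε.2 2) (hv i)]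
  have hb : ∀ i, 0 ≤ 3 * v i + t i := fun i => by
    nlinarith [(abs_le.1 (ht i)).1, hv i, mul_le_mul_of_nonneg_right hε.2 (hv i)]
  have hSa : ∑ i, (6 * v i + 4 * t i + f i) ≤ 61 / 10 * V := by
    rw [mul_sum]; exact sum_le_sum fun i _ => (ha i).2
  have hSf : ∑ i, f i ≤ V ^ 2 := by
    calc ∑ i, f i ≤ ∑ i, ε ^ 2 * v i := sum_le_sum fun i _ => hf i
      _ = ε ^ 2 * V := by rw [mul_sum]
      _ ≤ V * V := by gcongr; exact sum_nonneg fun i _ => hv i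
      _ = V ^ 2 := by ring
  -- the first-order terms cancel, which is why the fourth moment is `O(V²)`
  have hcancel : ∑ i, (6 * v i + 4 * t i + f i) - 4 * ∑ i, (3 * v i + t i) + 6 * V =
      ∑ i, f i := by
    simp only [V, mul_sum, ← sum_sub_distrib, ← sum_add_distrib]
    exact sum_congr rfl fun i _ => by ring
  have hSa0 : 0 ≤ ∑ i, (6 * v i + 4 * t i + f i) := sum_nonneg fun i _ => (ha i).1
  have hV0 : 0 ≤ V := sum_nonneg fun i _ => hv i
  have h4 := prod_one_add_le_one_add_sum_add_sq univ (fun i => (ha i).1) (by linarith)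
  have h3 := one_add_sum_le_prod_one_add univ hb
  have h2 := prod_one_add_le_one_add_sum_add_sq univ hv (by linarith)
  nlinarith

lemma sum_berMean_sq_le_mul_sq_sum_prodBer_mul_abs (hr : ∀ i, r i ∈ Icc (0 : ℝ) 1)
    (hz : ∀ i, berMean (r i) (z i) = 0) {ε : ℝ} (hε : ε ∈ Icc (0 : ℝ) (1 / 50))
    (hzε : ∀ i b, |z i b| ≤ ε) (hεV : ε ^ 2 ≤ ∑ i, berMean (r i) fun b => z i b ^ 2)
    (hV : ∑ i, berMean (r i) (fun b => z i b ^ 2) ≤ 2 / 15) :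
    ∑ i, berMean (r i) (fun b => z i b ^ 2) ≤
      45 * (∑ x, prodBer d r x * |∏ i, (1 + z i (x i)) - 1|) ^ 2 := by
  set V := ∑ i, berMean (r i) fun b => z i b ^ 2
  set A := ∑ x, prodBer d r x * |∏ i, (1 + z i (x i)) - 1|
  have hW := sum_prodBer_mul_prod_one_add_sub_one_sq hz
  set W := ∑ x, prodBer d r x * (∏ i, (1 + z i (x i)) - 1) ^ 2
  have hVW : V ≤ W := by
    rw [hW]
    linarith [one_add_sum_le_prod_one_add univ fun i => berMean_nonneg (hr i) fun b =>
      sq_nonneg (z i b)]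
  have hM := sum_prodBer_mul_prod_one_add_sub_one_pow_four_le hr hz hε hzε hεV hV
  have hHolder := sum_mul_sq_pow_three_le (prodBer_nonneg hr)
    fun x => ∏ i, (1 + z i (x i)) - 1
  have hV0 : 0 ≤ V := (sq_nonneg ε).trans hεV
  rcases hV0.eq_or_lt with hV0 | hV0
  · rw [← hV0]; positivity
  · refine le_of_mul_le_mul_left ?_ (pow_pos hV0 2)
    calc V ^ 2 * V = V ^ 3 := by ring
      _ ≤ W ^ 3 := pow_le_pow_left₀ hV0.le hVW 3
      _ ≤ A ^ 2 * (45 * V ^ 2) := hHolder.trans (by gcongr)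
      _ = V ^ 2 * (45 * A ^ 2) := by ring

end ProductPerturbation

/-- `Ber(p)(b) / Ber(q)(b) - 1`. -/
noncomputable def berRatioSubOne (p q : ℝ) (b : Bool) : ℝ :=
  if b then (p - q) / q else (q - p) / (1 - q)

section RatioSubOne

variable {p q : ℝ}

lemma berMean_berRatioSubOne (h0 : q ≠ 0) (h1 : 1 - q ≠ 0) :
    berMean q (berRatioSubOne p q) = 0 := by
  simp only [berMean, berRatioSubOne, if_true, Bool.false_eq_true, if_false]
  field_simp
  ring

lemma berMean_berRatioSubOne_sq (h0 : q ≠ 0) (h1 : 1 - q ≠ 0) :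
    berMean q (fun b => berRatioSubOne p q b ^ 2) = (p - q) ^ 2 / (q * (1 - q)) := by
  simp only [berMean, berRatioSubOne, if_true, Bool.false_eq_true, if_false]
  field_simp
  ring

lemma abs_berRatioSubOne_le (hq : q ∈ Icc (1 / 4 : ℝ) (3 / 4)) (b : Bool) :
    |berRatioSubOne p q b| ≤ 4 * |p - q| := by
  have h0 : 0 < q := by linarith [hq.1]
  have h1 : 0 < 1 - q := by linarith [hq.2]
  cases b
  · rw [berRatioSubOne, if_neg Bool.false_ne_true, abs_div, abs_of_pos h1, abs_sub_comm,
      div_le_iff₀ h1]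
    nlinarith [abs_nonneg (p - q), hq.2]
  · rw [berRatioSubOne, if_pos rfl, abs_div, abs_of_pos h0, div_le_iff₀ h0]
    nlinarith [abs_nonneg (p - q), hq.1]

end RatioSubOne

lemma prodBer_eq_mul_prod_one_add_berRatioSubOne {d : ℕ} (p : Fin d → ℝ) {q : Fin d → ℝ}
    (hq : ∀ i, q i ≠ 0 ∧ 1 - q i ≠ 0) (x : Fin d → Bool) :
    prodBer d p x = prodBer d q x * ∏ i, (1 + berRatioSubOne (p i) (q i) (x i)) := by
  rw [prodBer, prodBer, ← prod_mul_distrib]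
  refine prod_congr rfl fun i _ => ?_
  obtain ⟨h0, h1⟩ := hq i
  cases x i <;> simp only [berRatioSubOne, if_true, Bool.false_eq_true, if_false] <;>
    field_simp <;> ring

lemma div_seven_le_sdBer {d : ℕ} {p q : Fin d → ℝ} {α : ℝ} (hα : α ∈ Icc (0 : ℝ) (1 / 100))
    (hq : ∀ i, q i ∈ Icc (1 / 4 : ℝ) (3 / 4)) (hpq : ∀ i, |p i - q i| ≤ α / 2)
    (hs : α ^ 2 ≤ ∑ i, (p i - q i) ^ 2) (hs' : ∑ i, (p i - q i) ^ 2 ≤ 1 / 40) :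
    α / 7 ≤ sdBer d p q := by
  have hq01 : ∀ i, q i ∈ Icc (0 : ℝ) 1 := fun i =>
    ⟨by linarith [(hq i).1], by linarith [(hq i).2]⟩
  have hq' : ∀ i, q i ≠ 0 ∧ 1 - q i ≠ 0 := fun i =>
    ⟨by linarith [(hq i).1], by linarith [(hq i).2]⟩
  have hsd : sdBer d p q = 1 / 2 * ∑ x, prodBer d q x *
      |∏ i, (1 + berRatioSubOne (p i) (q i) (x i)) - 1| := by
    refine congrArg _ (sum_congr rfl fun x _ => ?_)
    rw [prodBer_eq_mul_prod_one_add_berRatioSubOne p hq' x, ← mul_sub_one, abs_mul,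
      abs_of_nonneg (prodBer_nonneg hq01 x)]
  have hv : ∀ i,
      4 * (p i - q i) ^ 2 ≤ berMean (q i) (fun b => berRatioSubOne (p i) (q i) b ^ 2) ∧
      berMean (q i) (fun b => berRatioSubOne (p i) (q i) b ^ 2) ≤ 16 / 3 * (p i - q i) ^ 2 :=
    fun i => by
      rw [berMean_berRatioSubOne_sq (hq' i).1 (hq' i).2]
      have hpos : 3 / 16 ≤ q i * (1 - q i) := by nlinarith [(hq i).1, (hq i).2]
      constructor
      · rw [le_div_iff₀ (by linarith)]
        nlinarith [sq_nonneg (p i - q i), sq_nonneg (2 * q i - 1)]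
      · rw [div_le_iff₀ (by linarith)]
        nlinarith [sq_nonneg (p i - q i)]
  have hV : (2 * α) ^ 2 ≤ ∑ i, berMean (q i) (fun b => berRatioSubOne (p i) (q i) b ^ 2) :=
    calc (2 * α) ^ 2 ≤ ∑ i, 4 * (p i - q i) ^ 2 := by rw [← mul_sum]; nlinarith
      _ ≤ _ := sum_le_sum fun i _ => (hv i).1
  have key := sum_berMean_sq_le_mul_sq_sum_prodBer_mul_abs hq01
    (fun i => berMean_berRatioSubOne (hq' i).1 (hq' i).2)
    ⟨by linarith [hα.1], by linarith [hα.2]⟩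
    (fun i b => (abs_berRatioSubOne_le (hq i) b).trans (by linarith [hpq i])) hV
    (calc _ ≤ ∑ i, 16 / 3 * (p i - q i) ^ 2 := sum_le_sum fun i _ => (hv i).2
      _ ≤ 2 / 15 := by rw [← mul_sum]; linarith)
  have hsd0 := sdBer_nonneg d p q
  rw [hsd] at hsd0 ⊢
  nlinarith [hα.1]

/-- Lower bound on TV distance between balanced product distributions: there are absolute
constants `α₀ ∈ (0,1]` and `C > 0` such that if `pᵢ ∈ [1/3,2/3]` for all `i` and
`‖p − q‖₂ ≥ α` for some `α ≤ α₀`, then `SD(P,Q) ≥ C·α`. -/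
theorem stmt_9 : ∃ α₀ : ℝ, α₀ ∈ Set.Ioc (0:ℝ) 1 ∧ ∃ C : ℝ, 0 < C ∧
    ∀ (d : ℕ) (p q : Fin d → ℝ) (α : ℝ),
      (∀ i, p i ∈ Set.Icc (1/3 : ℝ) (2/3)) → (∀ i, q i ∈ Set.Icc (0:ℝ) 1) →
      α ≤ α₀ → Real.sqrt (∑ i, (p i - q i)^2) ≥ α →
      sdBer d p q ≥ C * α := by
  refine ⟨1 / 100, ⟨by norm_num, by norm_num⟩, 1 / 50, by norm_num, ?_⟩
  intro d p q α hp hq hα₀ hα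
  rcases le_or_gt α 0 with hα0 | hα0
  · nlinarith [sdBer_nonneg d p q]
  have hs : α ^ 2 ≤ ∑ i, (p i - q i) ^ 2 :=
    (Real.le_sqrt hα0.le (sum_nonneg fun i _ => sq_nonneg _)).1 hα
  by_cases hfar : 1 / 40 ≤ ∑ i, (p i - q i) ^ 2
  · have hp01 : ∀ i, p i ∈ Icc (0 : ℝ) 1 := fun i =>
      ⟨by linarith [(hp i).1], by linarith [(hp i).2]⟩
    have hfar' : 1 / 41 ≤ (∑ i, (p i - q i) ^ 2) / (1 + ∑ i, (p i - q i) ^ 2) := by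
      rw [le_div_iff₀ (by linarith)]; linarith
    linarith [sumSq_div_one_add_le_sdBer hp01 hq]
  by_cases hcoord : ∃ i, α / 2 ≤ |p i - q i|
  · obtain ⟨i, hi⟩ := hcoord
    linarith [abs_sub_le_sdBer p q i]
  simp only [not_exists, not_le] at hcoord hfar
  have hq' : ∀ i, q i ∈ Icc (1 / 4 : ℝ) (3 / 4) := fun i => by
    obtain ⟨h1, h2⟩ := abs_lt.1 (hcoord i)
    constructor <;> linarith [(hp i).1, (hp i).2]
  linarith [div_seven_le_sdBer ⟨hα0.le, hα₀⟩ hq' (fun i => (hcoord i).le) hs hfar.le]
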